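/- Let E be a real inner product space, J : E → ℝ differentiable with gradient ∇J that is L-Lipschitz (L > 0), J bounded below by J_inf, and let σ ≥ 0. Let T ≥ 1 be an integer with T ≥ L², and set η := 1/√T, so that η ∈ (0, 1/L]. Let (Ω, 𝒜, P) be a probability space with filtration (𝓕_t)_{t∈ℕ}, and let (W_t)_{t≥0}, (G_t)_{t≥0} be E-valued random variables such that W_t is 𝓕_t-measurable, W_{t+1} = W_t − η·G_t, and almost surely E[G_t | 𝓕_t] = ∇J(W_t) and E[‖G_t − ∇J(W_t)‖² | 𝓕_t] ≤ σ², with J(W_t) and ‖G_t‖² integrable for all t. Then min_{0 ≤ t ≤ T−1} E[‖∇J(W_t)‖²] ≤ (2·(E[J(W_0)] − J_inf) + L·σ²)/√T; that is, the minimal expected squared gradient norm over the first T iterates is O(1/√T). -/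

import Mathlib

/-!
Integrating the descent lemma `J y ≤ J x + ⟪∇J x, y - x⟫ + L/2 ‖y - x‖²` along one step gives
`E J(W_{t+1}) ≤ E J(W_t) - η E⟪∇J(W_t), G_t⟫ + Lη²/2 E‖G_t‖²`. Conditioning on `ℱ t` turns
`E⟪∇J(W_t), G_t⟫` into `E‖∇J(W_t)‖²` and splits `E‖G_t‖²` as
`E‖G_t - ∇J(W_t)‖² + E‖∇J(W_t)‖² ≤ σ² + E‖∇J(W_t)‖²`, so with `Lη ≤ 1` each step decreases
`E J` by at least `η/2 E‖∇J(W_t)‖² - Lη²σ²/2`. Summing over `t < T` telescopes, the minimum is at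
most the average, and `η = 1/√T` balances the two error terms.
-/

open MeasureTheory RealInnerProductSpace

theorem image_le_add_inner_gradient_add_sq {E : Type*} [NormedAddCommGroup E]
    [InnerProductSpace ℝ E] [CompleteSpace E] {J : E → ℝ} {L : ℝ} (hdiff : Differentiable ℝ J)
    (hlip : ∀ x y : E, ‖gradient J x - gradient J y‖ ≤ L * ‖x - y‖) (x y : E) :
    J y ≤ J x + ⟪gradient J x, y - x⟫ + L / 2 * ‖y - x‖ ^ 2 := by
  set v := y - x
  let q : ℝ → ℝ := fun s => s * ⟪gradient J x, v⟫ + L / 2 * s ^ 2 * ‖v‖ ^ 2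
  let φ : ℝ → ℝ := fun s => J (x + s • v) - q s
  let φ' : ℝ → ℝ := fun s => ⟪gradient J (x + s • v), v⟫ - (⟪gradient J x, v⟫ + L * s * ‖v‖ ^ 2)
  have hφ : ∀ s, HasDerivAt φ (φ' s) s := by
    intro s
    have hline : HasDerivAt (fun s : ℝ => x + s • v) v s := by
      simpa using ((hasDerivAt_id s).smul_const v).const_add x
    have hJ : HasDerivAt (fun s => J (x + s • v)) ⟪gradient J (x + s • v), v⟫ s := by
      simpa [Function.comp_def] using
        (hdiff (x + s • v)).hasGradientAt.hasFDerivAt.comp_hasDerivAt s hline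
    have hq : HasDerivAt q (⟪gradient J x, v⟫ + L * s * ‖v‖ ^ 2) s :=
      (((hasDerivAt_id s).mul_const ⟪gradient J x, v⟫).add
        (((hasDerivAt_pow 2 s).const_mul (L / 2)).mul_const (‖v‖ ^ 2))).congr_deriv
        (by push_cast; ring)
    exact hJ.sub hq
  have hanti : AntitoneOn φ (Set.Icc 0 1) := by
    refine antitoneOn_of_hasDerivWithinAt_nonpos (convex_Icc 0 1)
      (fun s _ => (hφ s).continuousAt.continuousWithinAt) (fun s _ => (hφ s).hasDerivWithinAt)
      fun s hs => ?_
    rw [interior_Icc] at hs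
    have hgrad : ⟪gradient J (x + s • v) - gradient J x, v⟫ ≤ L * s * ‖v‖ ^ 2 :=
      calc ⟪gradient J (x + s • v) - gradient J x, v⟫
          ≤ ‖gradient J (x + s • v) - gradient J x‖ * ‖v‖ := real_inner_le_norm _ _
        _ ≤ L * ‖(x + s • v) - x‖ * ‖v‖ := by gcongr; exact hlip _ _
        _ = L * s * ‖v‖ ^ 2 := by
          rw [add_sub_cancel_left, norm_smul, Real.norm_of_nonneg hs.1.le]; ring
    simp only [φ']
    rw [inner_sub_left] at hgrad
    linarith
  have h := hanti (by simp) (by simp) zero_le_one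
  simp only [φ, q, zero_smul, one_smul, add_zero] at h
  simp only [v, add_sub_cancel] at h
  linarith

section L2

variable {Ω E : Type*} {m mΩ : MeasurableSpace Ω} {μ : Measure Ω}
  [NormedAddCommGroup E]

theorem MeasureTheory.MemLp.integrable_norm_sq {f : Ω → E} (hf : MemLp f 2 μ) :
    Integrable (fun ω => ‖f ω‖ ^ 2) μ :=
  (memLp_two_iff_integrable_sq_norm hf.1).1 hf

variable [InnerProductSpace ℝ E]

theorem MeasureTheory.MemLp.integrable_inner {f g : Ω → E} (hf : MemLp f 2 μ) (hg : MemLp g 2 μ) :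
    Integrable (fun ω => ⟪f ω, g ω⟫) μ :=
  (L2.integrable_inner (hf.toLp f) (hg.toLp g)).congr <| by
    filter_upwards [hf.coeFn_toLp, hg.coeFn_toLp] with ω hfω hgω
    rw [hfω, hgω]

variable [CompleteSpace E] [IsFiniteMeasure μ]

theorem integral_inner_condExp_right (hm : m ≤ mΩ) {f g : Ω → E}
    (hfm : AEStronglyMeasurable[m] f μ) (hf : MemLp f 2 μ) (hg : MemLp g 2 μ) :
    ∫ ω, ⟪f ω, (μ[g|m]) ω⟫ ∂μ = ∫ ω, ⟪f ω, g ω⟫ ∂μ := by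
  have hself : ⟪(condExpL2 E ℝ hm (hg.toLp g) : Lp E 2 μ), hf.toLp f⟫ = ⟪hg.toLp g, hf.toLp f⟫ :=
    inner_condExpL2_eq_inner_fun hm _ _ (hfm.congr hf.coeFn_toLp.symm)
  rw [L2.inner_def, L2.inner_def] at hself
  calc ∫ ω, ⟪f ω, (μ[g|m]) ω⟫ ∂μ
      = ∫ ω, ⟪(condExpL2 E ℝ hm (hg.toLp g) : Ω → E) ω, hf.toLp f ω⟫ ∂μ := by
        refine integral_congr_ae ?_
        filter_upwards [hf.coeFn_toLp, hg.condExpL2_ae_eq_condExp (𝕜 := ℝ) hm] with ω hfω hgω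
        rw [hfω, hgω, real_inner_comm]
    _ = ∫ ω, ⟪f ω, g ω⟫ ∂μ := by
        rw [hself]
        refine integral_congr_ae ?_
        filter_upwards [hf.coeFn_toLp, hg.coeFn_toLp] with ω hfω hgω
        rw [hfω, hgω, real_inner_comm]

variable {G D : Ω → E}

theorem integral_inner_eq_integral_norm_sq_of_condExp_ae_eq (hm : m ≤ mΩ) (hG : MemLp G 2 μ)
    (hD : μ[G|m] =ᵐ[μ] D) :
    ∫ ω, ⟪D ω, G ω⟫ ∂μ = ∫ ω, ‖D ω‖ ^ 2 ∂μ := by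
  have hDm : AEStronglyMeasurable[m] D μ := stronglyMeasurable_condExp.aestronglyMeasurable.congr hD
  rw [← integral_inner_condExp_right hm hDm ((hG.condExp one_le_two).ae_eq hD) hG]
  refine integral_congr_ae ?_
  filter_upwards [hD] with ω hω
  rw [hω, real_inner_self_eq_norm_sq]

/-- Pythagoras in `L²`: `G - μ[G|m]` is orthogonal to `m`-measurable functions. -/
theorem integral_norm_sq_eq_integral_norm_sub_sq_add (hm : m ≤ mΩ) (hG : MemLp G 2 μ)
    (hD : μ[G|m] =ᵐ[μ] D) :
    ∫ ω, ‖G ω‖ ^ 2 ∂μ = ∫ ω, ‖G ω - D ω‖ ^ 2 ∂μ + ∫ ω, ‖D ω‖ ^ 2 ∂μ := by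
  have hD2 : MemLp D 2 μ := (hG.condExp one_le_two).ae_eq hD
  have hGD : Integrable (fun ω => ‖G ω - D ω‖ ^ 2) μ := (hG.sub hD2).integrable_norm_sq
  have hDG : Integrable (fun ω => 2 * ⟪D ω, G ω⟫) μ := (hD2.integrable_inner hG).const_mul 2
  have hpyth : ∀ ω, ‖G ω‖ ^ 2 = ‖G ω - D ω‖ ^ 2 + 2 * ⟪D ω, G ω⟫ - ‖D ω‖ ^ 2 := fun ω => by
    rw [norm_sub_sq_real, real_inner_comm]; ring
  simp_rw [hpyth]
  have hsum : Integrable (fun ω => ‖G ω - D ω‖ ^ 2 + 2 * ⟪D ω, G ω⟫) μ := hGD.add hDG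
  rw [integral_sub hsum hD2.integrable_norm_sq, integral_add hGD hDG, integral_const_mul,
    integral_inner_eq_integral_norm_sq_of_condExp_ae_eq hm hG hD]
  ring

end L2

theorem integral_le_of_ae_condExp_le {Ω : Type*} {m mΩ : MeasurableSpace Ω} {μ : Measure Ω}
    [IsProbabilityMeasure μ] (hm : m ≤ mΩ) {f : Ω → ℝ} {c : ℝ}
    (h : ∀ᵐ ω ∂μ, (μ[f|m]) ω ≤ c) : ∫ ω, f ω ∂μ ≤ c := by
  rw [← integral_condExp hm]
  simpa using integral_mono_ae integrable_condExp (integrable_const c) h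

theorem sgd_step_integral_descent {Ω E : Type*} {m mΩ : MeasurableSpace Ω} {μ : Measure Ω}
    [IsFiniteMeasure μ] [NormedAddCommGroup E] [InnerProductSpace ℝ E] [CompleteSpace E]
    (hm : m ≤ mΩ) {J : E → ℝ} {L σ η : ℝ} (hL : 0 ≤ L) (hdiff : Differentiable ℝ J)
    (hlip : ∀ x y : E, ‖gradient J x - gradient J y‖ ≤ L * ‖x - y‖)
    (hη : 0 ≤ η) (hLη : L * η ≤ 1) {W W' G : Ω → E} (hW' : ∀ ω, W' ω = W ω - η • G ω)
    (hG : MemLp G 2 μ) (hmean : μ[G|m] =ᵐ[μ] fun ω => gradient J (W ω))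
    (hvar : ∫ ω, ‖G ω - gradient J (W ω)‖ ^ 2 ∂μ ≤ σ ^ 2)
    (hJ : Integrable (fun ω => J (W ω)) μ) (hJ' : Integrable (fun ω => J (W' ω)) μ) :
    η / 2 * ∫ ω, ‖gradient J (W ω)‖ ^ 2 ∂μ
      ≤ ∫ ω, J (W ω) ∂μ - ∫ ω, J (W' ω) ∂μ + L * η ^ 2 * σ ^ 2 / 2 := by
  set D : Ω → E := fun ω => gradient J (W ω)
  have hpt : ∀ ω, J (W' ω) ≤ J (W ω) - η * ⟪D ω, G ω⟫ + L / 2 * η ^ 2 * ‖G ω‖ ^ 2 := by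
    intro ω
    have h := image_le_add_inner_gradient_add_sq hdiff hlip (W ω) (W' ω)
    rw [hW', sub_sub_cancel_left, inner_neg_right, real_inner_smul_right, norm_neg, norm_smul,
      Real.norm_of_nonneg hη, mul_pow] at h
    rw [hW']
    linarith
  have hDG : Integrable (fun ω => ⟪D ω, G ω⟫) μ :=
    ((hG.condExp one_le_two).ae_eq hmean).integrable_inner hG
  have hJDG : Integrable (fun ω => J (W ω) - η * ⟪D ω, G ω⟫) μ := hJ.sub (hDG.const_mul η)
  have hexp : ∫ ω, J (W' ω) ∂μ ≤ ∫ ω, J (W ω) ∂μ - η * ∫ ω, ⟪D ω, G ω⟫ ∂μ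
      + L / 2 * η ^ 2 * ∫ ω, ‖G ω‖ ^ 2 ∂μ := by
    rw [← integral_const_mul, ← integral_const_mul, ← integral_sub hJ (hDG.const_mul η),
      ← integral_add hJDG (hG.integrable_norm_sq.const_mul _)]
    exact integral_mono hJ' (hJDG.add (hG.integrable_norm_sq.const_mul _)) hpt
  rw [integral_inner_eq_integral_norm_sq_of_condExp_ae_eq hm hG hmean,
    integral_norm_sq_eq_integral_norm_sub_sq_add hm hG hmean] at hexp
  have hg : 0 ≤ ∫ ω, ‖D ω‖ ^ 2 ∂μ := integral_nonneg fun ω => by positivity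
  have hnoise := mul_le_mul_of_nonneg_left hvar (by positivity : 0 ≤ L * η ^ 2)
  have hstep : L * η ^ 2 * ∫ ω, ‖D ω‖ ^ 2 ∂μ ≤ η * ∫ ω, ‖D ω‖ ^ 2 ∂μ := by
    calc L * η ^ 2 * ∫ ω, ‖D ω‖ ^ 2 ∂μ = L * η * (η * ∫ ω, ‖D ω‖ ^ 2 ∂μ) := by ring
      _ ≤ η * ∫ ω, ‖D ω‖ ^ 2 ∂μ := mul_le_of_le_one_left (by positivity) hLη
  linarith

theorem mul_inf'_range_le_of_le_sub_succ {T : ℕ} (hT : (Finset.range T).Nonempty) {g F : ℕ → ℝ}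
    {b c d : ℝ} (hc : 0 ≤ c) (hstep : ∀ t < T, c * g t ≤ F t - F (t + 1) + d) (hb : b ≤ F T) :
    c * (T * (Finset.range T).inf' hT g) ≤ F 0 - b + T * d := by
  have hmin : T * (Finset.range T).inf' hT g ≤ ∑ t ∈ Finset.range T, g t := by
    simpa using Finset.card_nsmul_le_sum _ g ((Finset.range T).inf' hT g) fun t ht =>
      Finset.inf'_le g ht
  have hsum : ∑ t ∈ Finset.range T, c * g t ≤ ∑ t ∈ Finset.range T, (F t - F (t + 1) + d) :=
    Finset.sum_le_sum fun t ht => hstep t (Finset.mem_range.mp ht)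
  rw [← Finset.mul_sum, Finset.sum_add_distrib, Finset.sum_range_sub', Finset.sum_const,
    Finset.card_range, nsmul_eq_mul] at hsum
  nlinarith [mul_le_mul_of_nonneg_left hmin hc]

theorem sgd_mul_inf'_integral_norm_gradient_sq_le {E : Type*} [NormedAddCommGroup E]
    [InnerProductSpace ℝ E] [CompleteSpace E] {Ω : Type*} {mΩ : MeasurableSpace Ω}
    {μ : Measure Ω} [IsProbabilityMeasure μ] (ℱ : Filtration ℕ mΩ) {J : E → ℝ} {L Jinf σ η : ℝ}
    (hL : 0 ≤ L) (hdiff : Differentiable ℝ J)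
    (hlip : ∀ x y : E, ‖gradient J x - gradient J y‖ ≤ L * ‖x - y‖) (hbd : ∀ x : E, Jinf ≤ J x)
    (hη : 0 ≤ η) (hLη : L * η ≤ 1) {T : ℕ} (hT : (Finset.range T).Nonempty) {W G : ℕ → Ω → E}
    (hrec : ∀ t ω, W (t + 1) ω = W t ω - η • G t ω)
    (hmean : ∀ t, μ[G t | ℱ t] =ᵐ[μ] fun ω => gradient J (W t ω))
    (hvar : ∀ t, ∀ᵐ ω ∂μ,
      (μ[fun ω' => ‖G t ω' - gradient J (W t ω')‖ ^ 2 | ℱ t]) ω ≤ σ ^ 2)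
    (hJint : ∀ t, Integrable (fun ω => J (W t ω)) μ)
    (hGint : ∀ t, Integrable (fun ω => ‖G t ω‖ ^ 2) μ) :
    η / 2 * (T * (Finset.range T).inf' hT fun t => ∫ ω, ‖gradient J (W t ω)‖ ^ 2 ∂μ)
      ≤ ∫ ω, J (W 0 ω) ∂μ - Jinf + T * (L * η ^ 2 * σ ^ 2 / 2) := by
  have hJinf : ∀ t, Jinf ≤ ∫ ω, J (W t ω) ∂μ := fun t => by
    simpa using integral_mono (integrable_const Jinf) (hJint t) fun ω => hbd (W t ω)
  by_cases hGm : ∀ t < T, AEStronglyMeasurable (G t) μ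
  · refine mul_inf'_range_le_of_le_sub_succ (F := fun t => ∫ ω, J (W t ω) ∂μ) hT (by positivity)
      (fun t ht => ?_) (hJinf T)
    exact sgd_step_integral_descent (ℱ.le t) hL hdiff hlip hη hLη (hrec t)
      ((memLp_two_iff_integrable_sq_norm (hGm t ht)).2 (hGint t)) (hmean t)
      (integral_le_of_ae_condExp_le (ℱ.le t) (hvar t)) (hJint t) (hJint (t + 1))
  · push Not at hGm
    obtain ⟨t, htT, hGt⟩ := hGm
    -- `G t` is not integrable, so its conditional expectation, hence `∇J (W t)`, is a.e. zero.
    have hgrad : (fun ω => gradient J (W t ω)) =ᵐ[μ] 0 := by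
      rw [← condExp_of_not_integrable fun h => hGt h.1]
      exact (hmean t).symm
    have hzero : ∫ ω, ‖gradient J (W t ω)‖ ^ 2 ∂μ = 0 :=
      integral_eq_zero_of_ae (by filter_upwards [hgrad] with ω hω; simp [hω])
    have hmin := Finset.inf'_le (fun t => ∫ ω, ‖gradient J (W t ω)‖ ^ 2 ∂μ)
      (Finset.mem_range.mpr htT)
    rw [hzero] at hmin
    have := mul_nonpos_of_nonneg_of_nonpos (by positivity : (0 : ℝ) ≤ η / 2 * T) hmin
    nlinarith [hJinf 0, (by positivity : (0 : ℝ) ≤ T * (L * η ^ 2 * σ ^ 2 / 2))]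

/-- **`O(1/√T)` stationarity of SGD**: with step size `η = 1/√T` (valid since `T ≥ L²` gives
`η ∈ (0, 1/L]`), the minimal expected squared gradient norm over the first `T` SGD iterates
is at most `(2 (E[J(W 0)] - Jinf) + L σ²)/√T`. -/
theorem sgd_min_expected_sq_grad_le_sqrt
    {E : Type*} [NormedAddCommGroup E] [InnerProductSpace ℝ E] [CompleteSpace E]
    {Ω : Type*} {mΩ : MeasurableSpace Ω} {μ : Measure Ω} [IsProbabilityMeasure μ]
    (ℱ : Filtration ℕ mΩ)
    (J : E → ℝ) (L Jinf σ η : ℝ)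
    (hL : 0 < L)
    (hdiff : Differentiable ℝ J)
    (hlip : ∀ x y : E, ‖gradient J x - gradient J y‖ ≤ L * ‖x - y‖)
    (hbd : ∀ x : E, Jinf ≤ J x)
    (T : ℕ) (hT : 1 ≤ T) (hTL : L ^ 2 ≤ (T : ℝ))
    (hηdef : η = 1 / Real.sqrt T)
    (W G : ℕ → Ω → E)
    (hrec : ∀ t ω, W (t + 1) ω = W t ω - η • G t ω)
    (hmean : ∀ t, μ[G t | ℱ t] =ᵐ[μ] fun ω => gradient J (W t ω))
    (hvar : ∀ t, ∀ᵐ ω ∂μ,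
      (μ[fun ω' => ‖G t ω' - gradient J (W t ω')‖ ^ 2 | ℱ t]) ω ≤ σ ^ 2)
    (hJint : ∀ t, Integrable (fun ω => J (W t ω)) μ)
    (hGint : ∀ t, Integrable (fun ω => ‖G t ω‖ ^ 2) μ) :
    (Finset.range T).inf' (Finset.nonempty_range_iff.mpr (by omega))
        (fun t => ∫ ω, ‖gradient J (W t ω)‖ ^ 2 ∂μ)
      ≤ (2 * ((∫ ω, J (W 0 ω) ∂μ) - Jinf) + L * σ ^ 2) / Real.sqrt T := by
  have hsqrtT : 0 < Real.sqrt T := Real.sqrt_pos.mpr (by exact_mod_cast hT)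
  have hη : 0 < η := by rw [hηdef]; positivity
  have hLη : L * η ≤ 1 := by
    rw [hηdef, mul_one_div, div_le_one hsqrtT]
    exact Real.le_sqrt_of_sq_le hTL
  have hbound := sgd_mul_inf'_integral_norm_gradient_sq_le ℱ hL.le hdiff hlip hbd hη.le hLη
    (T := T) (Finset.nonempty_range_iff.mpr (by omega)) hrec hmean hvar hJint hGint
  set gmin := (Finset.range T).inf' _ fun t => ∫ ω, ‖gradient J (W t ω)‖ ^ 2 ∂μ
  have hηT : Real.sqrt T * η = 1 := by rw [hηdef]; field_simp
  have hT_eq : (T : ℝ) = Real.sqrt T * Real.sqrt T := (Real.mul_self_sqrt (Nat.cast_nonneg T)).symm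
  have hlhs : η / 2 * (T * gmin) = gmin * Real.sqrt T / 2 := by
    linear_combination (η * gmin / 2) * hT_eq + (Real.sqrt T * gmin / 2) * hηT
  have hnoise : (T : ℝ) * (L * η ^ 2 * σ ^ 2 / 2) = L * σ ^ 2 / 2 := by
    linear_combination (L * η ^ 2 * σ ^ 2 / 2) * hT_eq
      + (L * σ ^ 2 / 2 * (Real.sqrt T * η + 1)) * hηT
  rw [le_div_iff₀ hsqrtT]
  linarith
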